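/- arXiv:1911.01319 — 4 statements merged into one kernel-verified Lean document; each statement's English description precedes it below -/
import Mathlib

section
/- Let k_α, k_β ≥ 1 be integers with k_α + k_β ≤ k, and set α = k_α/k and β = k_β/k (so α + β < 1). If 2^k ≥ (2edk)^{(6 ln 2 · (1+α−β))/(1−α−β)²}, then there exists a set M ⊆ V such that every clause of Φ contains at least k_α variables in M and at least k_β variables not in M. -/
/-!
Mark every variable independently with probability `p = (1 + α - β) / 2`, so that the expected
number `k p` of marked variables of a clause lies midway between `k_α` and `k - k_β`, at distance
`k (1 - α - β) / 2` from both. By the Chernoff bounds a clause is then badly marked with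
probability at most `2 exp (-k (1 - α - β)² / (6 (1 + α - β)))`, which the hypothesis bounds by
`1 / (e d k)`. A clause shares variables with at most `k (d - 1)` other clauses, so the symmetric
Lovász local lemma yields a marking that is good for every clause.
-/

open Finset

/-- A clause over variable set `V`. -/
structure Clause (V : Type) where
  vars : Finset V
  sign : V → Bool

namespace Marking

lemma one_add_pow_le_exp_mul {y : ℝ} (hy : -1 ≤ y) (m : ℕ) :
    (1 + y) ^ m ≤ Real.exp (m * y) := by
  rw [Real.exp_nat_mul]
  exact pow_le_pow_left₀ (by linarith) (by linarith [Real.add_one_le_exp y]) m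

lemma sq_div_two_le_add_one_sub_mul_log {x : ℝ} (hx0 : 0 ≤ x) (hx1 : x < 1) :
    x ^ 2 / 2 ≤ x + (1 - x) * Real.log (1 - x) := by
  have hpos : 0 < 1 - x := by linarith
  -- `sinh (log y) ≤ log y` for `y = 1 - x ≤ 1`
  have h := Real.sinh_le_self_iff.2 (Real.log_nonpos hpos.le (by linarith))
  rw [Real.sinh_log hpos] at h
  have := mul_inv_cancel₀ hpos.ne'
  nlinarith [mul_le_mul_of_nonneg_left h hpos.le]

lemma sq_div_three_le_one_add_mul_log_sub {x : ℝ} (hx0 : 0 ≤ x) (hx1 : x ≤ 1) :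
    x ^ 2 / 3 ≤ (1 + x) * Real.log (1 + x) - x := by
  have h := Real.le_log_one_add_of_nonneg hx0
  have hsq : (1 + x) * (2 * x / (x + 2)) - x = x ^ 2 / (x + 2) := by
    field_simp
    ring
  calc x ^ 2 / 3 ≤ x ^ 2 / (x + 2) := by gcongr; linarith
    _ = (1 + x) * (2 * x / (x + 2)) - x := hsq.symm
    _ ≤ (1 + x) * Real.log (1 + x) - x := by gcongr

lemma mul_log_le_of_rpow_le {x y m : ℝ} (hx : 0 ≤ x) (hm : 0 ≤ m) (h : x ^ y ≤ 2 ^ m) :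
    y * Real.log x ≤ m * Real.log 2 := by
  rcases hx.eq_or_lt with rfl | hx
  · simpa using mul_nonneg hm (Real.log_nonneg one_le_two)
  have := Real.log_le_log (Real.rpow_pos_of_pos hx y) h
  rwa [Real.log_rpow hx, Real.log_rpow two_pos] at this

lemma exists_exp_neg_one_div_le_mul_one_sub_pow (D : ℕ) :
    ∃ x : ℝ, 0 ≤ x ∧ x < 1 ∧ Real.exp (-1) / (D + 1) ≤ x * (1 - x) ^ D := by
  rcases Nat.eq_zero_or_pos D with rfl | hD0
  -- the usual choice `x = 1 / (D + 1)` is excluded when `D = 0`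
  · exact ⟨Real.exp (-1), (Real.exp_pos _).le, Real.exp_lt_one_iff.2 (by norm_num), by simp⟩
  refine ⟨1 / (D + 1), by positivity, (div_lt_one (by positivity)).2 (by simpa using hD0), ?_⟩
  have h : 1 - 1 / (D + 1 : ℝ) = (1 + (D : ℝ)⁻¹)⁻¹ := by
    have : (0 : ℝ) < D := by exact_mod_cast hD0
    field_simp
    ring
  rw [h, inv_pow, div_eq_mul_one_div _ ((D : ℝ) + 1), mul_comm, Real.exp_neg]
  gcongr
  exact Real.one_add_inv_pow_le_exp

section Bernoulli

variable {n : Type*} [Fintype n] {p : ℝ}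

def weight (p : ℝ) (ω : n → Bool) : ℝ := ∏ v, if ω v then p else 1 - p

def prob (p : ℝ) (E : Finset (n → Bool)) : ℝ := ∑ ω ∈ E, weight p ω

variable (hp0 : 0 ≤ p) (hp1 : p ≤ 1)
include hp0 hp1

lemma weight_nonneg (ω : n → Bool) : 0 ≤ weight p ω :=
  prod_nonneg fun v _ => by split <;> linarith

lemma prob_nonneg (E : Finset (n → Bool)) : 0 ≤ prob p E :=
  sum_nonneg fun ω _ => weight_nonneg hp0 hp1 ω

lemma prob_mono {E F : Finset (n → Bool)} (h : E ⊆ F) : prob p E ≤ prob p F :=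
  sum_le_sum_of_subset_of_nonneg h fun ω _ _ => weight_nonneg hp0 hp1 ω

lemma prob_union_le (E F : Finset (n → Bool)) : prob p (E ∪ F) ≤ prob p E + prob p F := by
  have := sum_union_inter (s₁ := E) (s₂ := F) (f := weight p)
  have := prob_nonneg hp0 hp1 (E ∩ F)
  unfold prob at *
  linarith

omit hp0 hp1

lemma prob_sdiff (E F : Finset (n → Bool)) : prob p (E \ F) = prob p E - prob p (E ∩ F) := by
  have := sum_inter_add_sum_sdiff E F (weight p)
  unfold prob
  linarith

variable [DecidableEq n]

lemma sum_weight : ∑ ω : n → Bool, weight p ω = 1 := by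
  simp [weight, ← Fintype.prod_sum fun (_ : n) (b : Bool) => if b then p else 1 - p]

lemma prob_univ : prob p (univ : Finset (n → Bool)) = 1 := sum_weight

lemma prob_eq_sum_ite (E : Finset (n → Bool)) :
    prob p E = ∑ ω, if ω ∈ E then weight p ω else 0 := by
  rw [sum_ite_mem, univ_inter, prob]

lemma prob_inter_eq_mul (A : Set n) {E F : Finset (n → Bool)}
    (hE : DependsOn (· ∈ E) A) (hF : DependsOn (· ∈ F) Aᶜ) :
    prob p (E ∩ F) = prob p E * prob p F := by
  classical
  let e := Equiv.piEquivPiSubtypeProd (· ∈ A) (fun _ => Bool)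
  let E' : Finset (A → Bool) := {a | e.symm (a, fun _ => false) ∈ E}
  let F' : Finset (↥Aᶜ → Bool) := {b | e.symm (fun _ => false, b) ∈ F}
  have hE' (ω : n → Bool) : ω ∈ E ↔ (e ω).1 ∈ E' := by
    simp only [E', mem_filter, mem_univ, true_and]
    exact Iff.of_eq (hE fun v hv => by simp [e, hv])
  have hF' (ω : n → Bool) : ω ∈ F ↔ (e ω).2 ∈ F' := by
    simp only [F', mem_filter, mem_univ, true_and]
    exact Iff.of_eq (hF fun v hv => by simp [e, show v ∉ A from hv])
  have hweight (ω : n → Bool) : weight p ω = weight p (e ω).1 * weight p (e ω).2 :=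
    (Fintype.prod_subtype_mul_prod_subtype (· ∈ A) _).symm
  have hsplit (G : Finset (A → Bool)) (H : Finset (↥Aᶜ → Bool)) :
      ∑ ω, (if (e ω).1 ∈ G ∧ (e ω).2 ∈ H then weight p ω else 0) =
        prob p G * prob p H := by
    rw [← e.symm.sum_comp, Fintype.sum_prod_type, prob_eq_sum_ite, prob_eq_sum_ite, sum_mul_sum]
    refine sum_congr rfl fun a _ => sum_congr rfl fun b _ => ?_
    simp only [Equiv.apply_symm_apply, hweight]
    split_ifs <;> simp_all
  calc prob p (E ∩ F) = prob p E' * prob p F' := by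
        rw [← hsplit, prob_eq_sum_ite]
        simp only [mem_inter, hE', hF']
    _ = (prob p E' * prob p (univ : Finset (↥Aᶜ → Bool))) *
        (prob p (univ : Finset (A → Bool)) * prob p F') := by simp only [prob_univ]; ring
    _ = prob p E * prob p F := by
        rw [← hsplit, ← hsplit, prob_eq_sum_ite, prob_eq_sum_ite]
        simp only [hE', hF', mem_univ, and_true, true_and]

def countTrue (T : Finset n) (ω : n → Bool) : ℕ := #{v ∈ T | ω v}

lemma sum_weight_mul_pow_countTrue (T : Finset n) (t : ℝ) :
    ∑ ω, weight p ω * t ^ countTrue T ω = (1 - p + p * t) ^ #T := by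
  have hterm (ω : n → Bool) : weight p ω * t ^ countTrue T ω =
      ∏ v, (if ω v then p else 1 - p) * (if v ∈ T ∧ ω v then t else 1) := by
    rw [prod_mul_distrib, ← prod_filter, prod_const, countTrue, weight]
    congr 3
    ext v
    simp
  simp only [hterm]
  rw [← Fintype.prod_sum fun v (b : Bool) =>
      (if b then p else 1 - p) * (if v ∈ T ∧ b then t else 1),
    ← prod_const, ← prod_subset (subset_univ T) fun v _ hv => by simp [hv]]
  refine prod_congr rfl fun v hv => ?_
  simp [hv]
  ring

lemma prob_le_div_pow (hp0 : 0 ≤ p) (hp1 : p ≤ 1) (T : Finset n) {a : ℕ} {t : ℝ}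
    (ht : 0 < t) {E : Finset (n → Bool)} (hE : ∀ ω ∈ E, t ^ a ≤ t ^ countTrue T ω) :
    prob p E ≤ (1 - p + p * t) ^ #T / t ^ a := by
  rw [le_div_iff₀ (by positivity), prob, sum_mul, ← sum_weight_mul_pow_countTrue]
  calc ∑ ω ∈ E, weight p ω * t ^ a ≤ ∑ ω ∈ E, weight p ω * t ^ countTrue T ω :=
        sum_le_sum fun ω hω => mul_le_mul_of_nonneg_left (hE ω hω) (weight_nonneg hp0 hp1 ω)
    _ ≤ ∑ ω, weight p ω * t ^ countTrue T ω :=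
        sum_le_sum_of_subset_of_nonneg (subset_univ E) fun ω _ _ =>
          mul_nonneg (weight_nonneg hp0 hp1 ω) (by positivity)

end Bernoulli

section Chernoff

variable {n : Type*} [Fintype n] [DecidableEq n] {p : ℝ} (hp0 : 0 ≤ p) (hp1 : p ≤ 1)
  (T : Finset n) {a : ℕ} {ε : ℝ}
include hp0 hp1

lemma prob_countTrue_le_le (hε0 : 0 ≤ ε) (hε1 : ε < 1)
    (ha : (a : ℝ) = (1 - ε) * (#T * p)) :
    prob p {ω | countTrue T ω ≤ a} ≤ Real.exp (-(#T * p * ε ^ 2 / 2)) := by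
  have hpos : 0 < 1 - ε := by linarith
  calc prob p {ω | countTrue T ω ≤ a} ≤ (1 - p + p * (1 - ε)) ^ #T / (1 - ε) ^ a :=
        prob_le_div_pow hp0 hp1 T hpos fun ω hω =>
          pow_le_pow_of_le_one hpos.le (by linarith) (mem_filter.1 hω).2
    _ = (1 + -(p * ε)) ^ #T / Real.exp (a * Real.log (1 - ε)) := by
        rw [Real.exp_nat_mul, Real.exp_log hpos]
        ring_nf
    _ ≤ Real.exp (#T * -(p * ε)) / Real.exp (a * Real.log (1 - ε)) := by
        gcongr
        exact one_add_pow_le_exp_mul (by nlinarith) _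
    _ = Real.exp (-(#T * p) * (ε + (1 - ε) * Real.log (1 - ε))) := by
        rw [← Real.exp_sub, ha]
        ring_nf
    _ ≤ Real.exp (-(#T * p * ε ^ 2 / 2)) := by
        have := sq_div_two_le_add_one_sub_mul_log hε0 hε1
        refine Real.exp_le_exp.2 ?_
        nlinarith [mul_nonneg (Nat.cast_nonneg (α := ℝ) #T) hp0]

lemma prob_le_countTrue_le (hε0 : 0 ≤ ε) (hε1 : ε ≤ 1)
    (ha : (a : ℝ) = (1 + ε) * (#T * p)) :
    prob p {ω | a ≤ countTrue T ω} ≤ Real.exp (-(#T * p * ε ^ 2 / 3)) := by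
  have hpos : 0 < 1 + ε := by linarith
  calc prob p {ω | a ≤ countTrue T ω} ≤ (1 - p + p * (1 + ε)) ^ #T / (1 + ε) ^ a :=
        prob_le_div_pow hp0 hp1 T hpos fun ω hω =>
          pow_le_pow_right₀ (by linarith) (mem_filter.1 hω).2
    _ = (1 + p * ε) ^ #T / Real.exp (a * Real.log (1 + ε)) := by
        rw [Real.exp_nat_mul, Real.exp_log hpos]
        ring_nf
    _ ≤ Real.exp (#T * (p * ε)) / Real.exp (a * Real.log (1 + ε)) := by
        gcongr
        exact one_add_pow_le_exp_mul (by nlinarith) _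
    _ = Real.exp (-(#T * p) * ((1 + ε) * Real.log (1 + ε) - ε)) := by
        rw [← Real.exp_sub, ha]
        ring_nf
    _ ≤ Real.exp (-(#T * p * ε ^ 2 / 3)) := by
        have := sq_div_three_le_one_add_mul_log_sub hε0 hε1
        refine Real.exp_le_exp.2 ?_
        nlinarith [mul_nonneg (Nat.cast_nonneg (α := ℝ) #T) hp0]

lemma prob_countTrue_le_or_le {c : ℕ} {h : ℝ} (hh0 : 0 ≤ h) (hhμ : h < #T * p)
    (ha : (a : ℝ) = #T * p - h) (hc : (c : ℝ) = #T * p + h) :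
    prob p {ω | countTrue T ω ≤ a ∨ c ≤ countTrue T ω} ≤
      2 * Real.exp (-(h ^ 2 / (3 * (#T * p)))) := by
  have hμ : 0 < (#T * p : ℝ) := by linarith
  have hε0 : 0 ≤ h / (#T * p) := by positivity
  have hε1 : h / (#T * p) < 1 := (div_lt_one hμ).2 hhμ
  have hlow := prob_countTrue_le_le hp0 hp1 T (a := a) hε0 hε1
    (by rw [ha, sub_mul, one_mul, div_mul_cancel₀ _ hμ.ne'])
  have hupp := prob_le_countTrue_le hp0 hp1 T (a := c) hε0 hε1.le
    (by rw [hc, add_mul, one_mul, div_mul_cancel₀ _ hμ.ne'])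
  have hμε (k : ℝ) : #T * p * (h / (#T * p)) ^ 2 / k = h ^ 2 / (k * (#T * p)) := by field_simp
  rw [hμε] at hlow hupp
  have : Real.exp (-(h ^ 2 / (2 * (#T * p)))) ≤ Real.exp (-(h ^ 2 / (3 * (#T * p)))) := by
    gcongr
    norm_num
  rw [filter_or]
  linarith [prob_union_le hp0 hp1 {ω | countTrue T ω ≤ a} {ω | c ≤ countTrue T ω}]

end Chernoff

section LocalLemma

variable {n ι : Type*} [Fintype n] [DecidableEq n] {p : ℝ} {B : ι → Finset (n → Bool)}

def avoid (B : ι → Finset (n → Bool)) (S : Finset ι) : Finset (n → Bool) :=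
  {ω | ∀ j ∈ S, ω ∉ B j}

@[simp] lemma avoid_empty : avoid B ∅ = univ := by simp [avoid]

lemma avoid_anti {S S' : Finset ι} (h : S ⊆ S') : avoid B S' ⊆ avoid B S := fun ω hω => by
  simp only [avoid, mem_filter, mem_univ, true_and] at hω ⊢
  exact fun j hj => hω j (h hj)

lemma dependsOn_avoid {A : Set n} {S : Finset ι} (h : ∀ j ∈ S, DependsOn (· ∈ B j) A) :
    DependsOn (· ∈ avoid B S) A := fun ω ω' hωω' => by
  simp only [avoid, mem_filter, mem_univ, true_and, eq_iff_iff]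
  exact forall₂_congr fun j hj => not_congr (Iff.of_eq (h j hj hωω'))

variable [DecidableEq ι]

lemma avoid_insert (j : ι) (S : Finset ι) : avoid B (insert j S) = avoid B S \ B j := by
  ext ω
  simp [avoid, and_comm]

lemma one_sub_pow_card_mul_prob_avoid_le {x : ℝ} (hx : x ≤ 1) (S T : Finset ι)
    (h : ∀ U ⊆ T, ∀ j ∈ T, j ∉ U →
      prob p (B j ∩ avoid B (S ∪ U)) ≤ x * prob p (avoid B (S ∪ U))) :
    (1 - x) ^ #T * prob p (avoid B S) ≤ prob p (avoid B (S ∪ T)) := by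
  induction T using Finset.induction_on with
  | empty => simp
  | insert j T hj ih =>
    have hT := ih fun U hU j' hj' => h U (hU.trans (subset_insert j T)) j' (mem_insert_of_mem hj')
    have hstep := h T (subset_insert j T) j (mem_insert_self j T) hj
    rw [card_insert_of_notMem hj, union_insert, avoid_insert, prob_sdiff, inter_comm, pow_succ]
    nlinarith

variable [Fintype ι] (hp0 : 0 ≤ p) (hp1 : p ≤ 1) (vars : ι → Finset n)
  (hB : ∀ i, DependsOn (· ∈ B i) (vars i)) {D : ℕ}
  (hD : ∀ i, #{j | j ≠ i ∧ ¬Disjoint (vars j) (vars i)} ≤ D)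
include hp0 hp1 hB hD

lemma prob_inter_avoid_le {x : ℝ} (hx0 : 0 ≤ x) (hx1 : x ≤ 1)
    (hBx : ∀ i, prob p (B i) ≤ x * (1 - x) ^ D) (S : Finset ι) {i : ι} (hi : i ∉ S) :
    prob p (B i ∩ avoid B S) ≤ x * prob p (avoid B S) := by
  induction S using Finset.strongInduction generalizing i with
  | H S ih =>
  set S₁ := {j ∈ S | ¬Disjoint (vars j) (vars i)}
  set S₂ := {j ∈ S | Disjoint (vars j) (vars i)}
  have hS : S₂ ∪ S₁ = S := filter_union_filter_not_eq _ S
  have hS₁ : #S₁ ≤ D := (card_le_card fun j hj => by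
    simp only [S₁, mem_filter, mem_univ, true_and] at hj ⊢
    exact ⟨fun hji => hi (hji ▸ hj.1), hj.2⟩).trans (hD i)
  have hindep : prob p (B i ∩ avoid B S₂) = prob p (B i) * prob p (avoid B S₂) := by
    refine prob_inter_eq_mul (vars i) (hB i) (dependsOn_avoid fun j hj => (hB j).mono ?_)
    exact Set.subset_compl_iff_disjoint_right.2 (disjoint_coe.2 (mem_filter.1 hj).2)
  -- adding the dependent events to the conditioning one at a time costs a factor `1 - x` each
  have hchain : (1 - x) ^ #S₁ * prob p (avoid B S₂) ≤ prob p (avoid B S) := by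
    rw [← hS]
    refine one_sub_pow_card_mul_prob_avoid_le hx1 S₂ S₁ fun U hU j hj hjU => ?_
    have hj' : j ∉ S₂ ∪ U := by
      simp only [mem_union, not_or]
      exact ⟨fun h => (mem_filter.1 hj).2 (mem_filter.1 h).2, hjU⟩
    refine ih _ ((ssubset_iff_of_subset ?_).2 ⟨j, filter_subset _ S hj, hj'⟩) hj'
    exact union_subset (filter_subset _ S) (hU.trans (filter_subset _ S))
  have hS₂ := prob_nonneg hp0 hp1 (avoid B S₂)
  calc prob p (B i ∩ avoid B S) ≤ prob p (B i ∩ avoid B S₂) :=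
        prob_mono hp0 hp1 (inter_subset_inter_left (avoid_anti (filter_subset _ S)))
    _ = prob p (B i) * prob p (avoid B S₂) := hindep
    _ ≤ x * ((1 - x) ^ #S₁ * prob p (avoid B S₂)) := by
        have := pow_le_pow_of_le_one (sub_nonneg.2 hx1) (by linarith) hS₁
        nlinarith [hBx i, mul_nonneg hx0 hS₂]
    _ ≤ x * prob p (avoid B S) := mul_le_mul_of_nonneg_left hchain hx0

lemma exists_forall_notMem_of_le_mul_one_sub_pow {x : ℝ} (hx0 : 0 ≤ x) (hx1 : x < 1)
    (hBx : ∀ i, prob p (B i) ≤ x * (1 - x) ^ D) : ∃ ω : n → Bool, ∀ i, ω ∉ B i := by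
  have hpos : 0 < prob p (avoid B (univ : Finset ι)) := by
    have := one_sub_pow_card_mul_prob_avoid_le hx1.le ∅ univ fun U _ j _ hjU =>
      prob_inter_avoid_le hp0 hp1 vars hB hD hx0 hx1.le hBx _ (by rwa [empty_union])
    rw [avoid_empty, prob_univ, mul_one, empty_union] at this
    exact (pow_pos (sub_pos.2 hx1) _).trans_le this
  obtain ⟨ω, hω⟩ : (avoid B (univ : Finset ι)).Nonempty := by
    by_contra h
    rw [not_nonempty_iff_eq_empty.1 h] at hpos
    exact hpos.ne' rfl
  simp only [avoid, mem_filter, mem_univ, true_and, forall_const] at hω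
  exact ⟨ω, hω⟩

lemma exists_forall_notMem_of_exp_mul_le_one
    (hq : ∀ i, Real.exp 1 * prob p (B i) * (D + 1) ≤ 1) :
    ∃ ω : n → Bool, ∀ i, ω ∉ B i := by
  obtain ⟨x, hx0, hx1, hx⟩ := exists_exp_neg_one_div_le_mul_one_sub_pow D
  refine exists_forall_notMem_of_le_mul_one_sub_pow hp0 hp1 vars hB hD hx0 hx1 fun i => ?_
  refine le_trans ?_ hx
  rw [Real.exp_neg, le_div_iff₀ (by positivity), ← one_div, le_div_iff₀ (Real.exp_pos 1)]
  linarith [hq i]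

end LocalLemma

lemma card_neighbors_le {n ι : Type*} [DecidableEq n] [Fintype ι] [DecidableEq ι]
    (T : ι → Finset n) {k d : ℕ} (hk : ∀ i, #(T i) = k) (hdeg : ∀ v, #{i | v ∈ T i} ≤ d)
    (i : ι) :
    #{j | j ≠ i ∧ ¬Disjoint (T j) (T i)} ≤ k * (d - 1) :=
  calc #{j | j ≠ i ∧ ¬Disjoint (T j) (T i)}
      ≤ #((T i).biUnion fun v => (univ.filter fun j => v ∈ T j).erase i) := by
        refine card_le_card fun j hj => ?_
        simp only [mem_filter, mem_univ, true_and, not_disjoint_iff] at hj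
        obtain ⟨hji, v, hvj, hvi⟩ := hj
        exact mem_biUnion.2 ⟨v, hvi, mem_erase.2 ⟨hji, by simpa using hvj⟩⟩
    _ ≤ ∑ v ∈ T i, #((univ.filter fun j => v ∈ T j).erase i) := card_biUnion_le
    _ ≤ ∑ v ∈ T i, (d - 1) := sum_le_sum fun v hv => by
        rw [card_erase_of_mem (by simpa using hv)]
        exact Nat.sub_le_sub_right (hdeg v) 1
    _ = k * (d - 1) := by rw [sum_const, hk, smul_eq_mul]

section Application

variable {n : Type*} [Fintype n] [DecidableEq n]

def badEvent (T : Finset n) (kα kβ : ℕ) : Finset (n → Bool) :=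
  {ω | countTrue T ω ≤ kα ∨ #T - kβ ≤ countTrue T ω}

lemma exp_mul_prob_badEvent_mul_le_one {T : Finset n} {k d kα kβ : ℕ} (hT : #T = k)
    (hd : 1 ≤ d) (hα : 1 ≤ kα) (hβ : 1 ≤ kβ) (hαβ : kα + kβ < k)
    (hL : Real.log (2 * Real.exp 1 * d * k) * (6 * (k + kα - kβ)) ≤ (k - kα - kβ) ^ 2) :
    Real.exp 1 * prob ((k + kα - kβ) / (2 * k)) (badEvent T kα kβ) * ((k * (d - 1) : ℕ) + 1)
      ≤ 1 := by
  have hk : (0 : ℝ) < k := by exact_mod_cast (show 0 < k by omega)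
  have hd' : (1 : ℝ) ≤ d := by exact_mod_cast hd
  have hα' : (1 : ℝ) ≤ kα := by exact_mod_cast hα
  have hβ' : (1 : ℝ) ≤ kβ := by exact_mod_cast hβ
  have hαβ' : (kα + kβ : ℝ) < k := by exact_mod_cast hαβ
  set p : ℝ := (k + kα - kβ) / (2 * k)
  have hμ : #T * p = (k + kα - kβ) / 2 := by simp only [p, hT]; field_simp
  have hp0 : 0 ≤ p := div_nonneg (by linarith) (by positivity)
  have hp1 : p ≤ 1 := (div_le_one (by positivity)).2 (by linarith)
  have hbad := prob_countTrue_le_or_le hp0 hp1 T (a := kα) (c := #T - kβ)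
    (h := (k - kα - kβ) / 2) (by linarith) (by rw [hμ]; linarith) (by rw [hμ]; ring)
    (by rw [hμ, Nat.cast_sub (by omega), hT]; ring)
  rw [hμ] at hbad
  have hexp : Real.exp (-(((k - kα - kβ) / 2) ^ 2 / (3 * ((k + kα - kβ) / 2)) : ℝ)) ≤
      (2 * Real.exp 1 * d * k)⁻¹ := by
    rw [← Real.exp_log (x := 2 * Real.exp 1 * d * k) (by positivity), ← Real.exp_neg]
    gcongr
    rw [le_div_iff₀ (by linarith)]
    linarith
  have hD : ((k * (d - 1) : ℕ) : ℝ) + 1 ≤ d * k := by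
    push_cast [Nat.cast_sub hd]
    nlinarith
  calc Real.exp 1 * prob p (badEvent T kα kβ) * ((k * (d - 1) : ℕ) + 1)
      ≤ Real.exp 1 * (2 * (2 * Real.exp 1 * d * k)⁻¹) * (d * k) := by
        have := prob_nonneg hp0 hp1 (badEvent T kα kβ)
        gcongr
        exact hbad.trans (by gcongr)
    _ = 1 := by field_simp

lemma dependsOn_badEvent (T : Finset n) (kα kβ : ℕ) : DependsOn (· ∈ badEvent T kα kβ) T :=
  fun ω ω' h => by
    have : countTrue T ω = countTrue T ω' := by
      rw [countTrue, countTrue, filter_congr fun v hv => by rw [h v hv]]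
    simp [badEvent, this]

lemma exists_marking_of_fintype {ι : Type*} [Fintype ι] [DecidableEq ι] (T : ι → Finset n)
    {k d kα kβ : ℕ} (hk : ∀ i, #(T i) = k) (hdeg : ∀ v, #{i | v ∈ T i} ≤ d)
    (hα : 1 ≤ kα) (hβ : 1 ≤ kβ) (hαβ : kα + kβ < k)
    (hL : Real.log (2 * Real.exp 1 * d * k) * (6 * (k + kα - kβ)) ≤ (k - kα - kβ) ^ 2) :
    ∃ M : Finset n, ∀ i, kα ≤ #(T i ∩ M) ∧ kβ ≤ #(T i \ M) := by
  have hk' : (0 : ℝ) < k := by exact_mod_cast (show 0 < k by omega)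
  have hαβ' : (kα + kβ : ℝ) < k := by exact_mod_cast hαβ
  have hα' : (0 : ℝ) ≤ kα := kα.cast_nonneg
  have hβ' : (0 : ℝ) ≤ kβ := kβ.cast_nonneg
  have hd (i : ι) : 1 ≤ d := by
    obtain ⟨v, hv⟩ := card_pos.1 ((hk i).symm ▸ (show 0 < k by omega))
    exact (card_pos.2 ⟨i, mem_filter.2 ⟨mem_univ i, hv⟩⟩).trans_le (hdeg v)
  obtain ⟨ω, hω⟩ := exists_forall_notMem_of_exp_mul_le_one
    (div_nonneg (by linarith) (by positivity)) ((div_le_one (by positivity)).2 (by linarith)) T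
    (fun i => dependsOn_badEvent (T i) kα kβ) (card_neighbors_le T hk hdeg)
    fun i => exp_mul_prob_badEvent_mul_le_one (hk i) (hd i) hα hβ hαβ hL
  refine ⟨univ.filter fun v => ω v, fun i => ?_⟩
  have hgood := hω i
  simp only [badEvent, mem_filter, mem_univ, true_and, not_or, not_le, hk i] at hgood
  have hinter : #(T i ∩ univ.filter fun v => ω v) = countTrue (T i) ω := by
    rw [inter_filter, inter_univ, countTrue]
  have hsdiff := card_sdiff_add_card_inter (T i) (univ.filter fun v => ω v)
  have := hk i
  omega

end Application

lemma log_mul_le_sq_of_rpow_le {k d kα kβ : ℕ} {α β : ℝ} (hk : 0 < k)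
    (hαdef : α = kα / k) (hβdef : β = kβ / k) (hlt : α + β < 1)
    (hcond : (2 * Real.exp 1 * d * k) ^ ((6 * Real.log 2 * (1 + α - β)) / (1 - α - β) ^ 2)
        ≤ (2 : ℝ) ^ (k : ℝ)) :
    Real.log (2 * Real.exp 1 * d * k) * (6 * (k + kα - kβ)) ≤ (k - kα - kβ) ^ 2 := by
  have hk' : (0 : ℝ) < k := by exact_mod_cast hk
  have hγ : 0 < 1 - α - β := by linarith
  have h := mul_log_le_of_rpow_le (by positivity) hk'.le hcond
  rw [div_mul_eq_mul_div, div_le_iff₀ (by positivity)] at h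
  have h' : 6 * ((1 + α - β) * Real.log (2 * Real.exp 1 * d * k)) ≤ k * (1 - α - β) ^ 2 :=
    le_of_mul_le_mul_left (by linarith) (Real.log_pos one_lt_two)
  set L := Real.log (2 * Real.exp 1 * d * k)
  rw [hαdef, hβdef] at h'
  field_simp at h'
  linarith

end Marking

open Marking in
/-- Let `Φ` be a `k`-uniform CNF formula in which every variable appears
in at most `d` clauses.  Let `k_α, k_β ≥ 1` with `k_α + k_β ≤ k`, and set `α = k_α/k`,
`β = k_β/k` (so `α + β < 1`).  If `2^k ≥ (2edk)^{(6 ln 2 · (1+α−β))/(1−α−β)²}`, then there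
is a set `M ⊆ V` of marked variables such that every clause contains at least `k_α`
marked variables and at least `k_β` unmarked variables. -/
theorem stmt_1 {V ι : Type} [DecidableEq V] [Fintype ι]
    (cl : ι → Clause V) (k d kα kβ : ℕ)
    (hk : ∀ i, (cl i).vars.card = k)
    (hdeg : ∀ v : V, (Finset.univ.filter fun i => v ∈ (cl i).vars).card ≤ d)
    (hα : 1 ≤ kα) (hβ : 1 ≤ kβ) (hαβ : kα + kβ ≤ k)
    (α β : ℝ) (hαdef : α = (kα : ℝ) / k) (hβdef : β = (kβ : ℝ) / k)
    (hlt : α + β < 1)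
    (hcond : (2 * Real.exp 1 * d * k) ^ ((6 * Real.log 2 * (1 + α - β)) / (1 - α - β) ^ 2)
        ≤ (2 : ℝ) ^ (k : ℝ)) :
    ∃ M : Finset V, ∀ i, kα ≤ ((cl i).vars ∩ M).card ∧ kβ ≤ ((cl i).vars \ M).card := by
  classical
  have hk0 : 0 < k := by omega
  have hαβ' : kα + kβ < k := by
    rw [hαdef, hβdef, ← add_div, div_lt_one (by positivity)] at hlt
    exact_mod_cast hlt
  set U := univ.biUnion fun i => (cl i).vars
  have hU (i : ι) : (cl i).vars ⊆ U := subset_biUnion_of_mem (fun i => (cl i).vars) (mem_univ i)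
  obtain ⟨M, hM⟩ := exists_marking_of_fintype (fun i => (cl i).vars.subtype (· ∈ U))
    (fun i => by rw [card_subtype, filter_true_of_mem (hU i), hk i])
    (fun v => by simpa [mem_subtype] using hdeg v) hα hβ hαβ'
    (log_mul_le_sq_of_rpow_le hk0 hαdef hβdef hlt hcond)
  refine ⟨M.map (Function.Embedding.subtype _), fun i => ?_⟩
  rw [← subtype_map_of_mem (hU i), ← map_inter, ← Finset.map_sdiff, card_map, card_map]
  exact hM i
end

section
/- For a CNF formula Φ = (V, C) with n = |V| variables and |C| ≤ nd clauses, it holds that Z(θ_0)/Z(θ_1) ≤ e and Z(θ_{ℓ+1}) ≤ Z(θ_ℓ) for every ℓ ≥ 0; consequently, the random variable W = 2^n·Π_{i=1}^{ℓ} W_i (with W_i as in the annealing schedule, mutually independent) satisfies Var(W)/E[W]² = Z(θ_{ℓ+1})·Z(θ_0)/(Z(θ_ℓ)·Z(θ_1)) − 1 ≤ e − 1. -/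
open Finset

/-- A clause is satisfied by an assignment iff some variable of the clause is
assigned the polarity of its literal. -/
def Clause.sat {V : Type} (c : Clause V) (X : V → Bool) : Prop :=
  ∃ v ∈ c.vars, X v = c.sign v

instance {V : Type} (c : Clause V) (X : V → Bool) : Decidable (c.sat X) :=
  inferInstanceAs (Decidable (∃ v ∈ c.vars, X v = c.sign v))

/-- `|F(X)|`: the number of clauses not satisfied by the assignment `X`. -/
def numUnsat {V ι : Type} [Fintype ι] (cl : ι → Clause V) (X : V → Bool) : ℕ :=
  (Finset.univ.filter fun i => ¬ (cl i).sat X).card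

/-- The weight `w_θ(X) = exp(−θ·|F(X)|)`. -/
noncomputable def wt {V ι : Type} [Fintype ι] (cl : ι → Clause V) (θ : ℝ)
    (X : V → Bool) : ℝ :=
  Real.exp (-θ * numUnsat cl X)

/-- The partition function `Z(θ) = Σ_{X ∈ {0,1}^V} w_θ(X)`. -/
noncomputable def partZ {V ι : Type} [Fintype V] [DecidableEq V] [Fintype ι]
    (cl : ι → Clause V) (θ : ℝ) : ℝ :=
  ∑ X : V → Bool, wt cl θ X

/-- The expectation `E[W_i]` of the random variable `W_i = w_{θcur}(X)/w_{θprev}(X)`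
where `X ∼ μ_{θprev}`. -/
noncomputable def EW {V ι : Type} [Fintype V] [DecidableEq V] [Fintype ι]
    (cl : ι → Clause V) (θprev θcur : ℝ) : ℝ :=
  ∑ X : V → Bool, (wt cl θprev X / partZ cl θprev) * (wt cl θcur X / wt cl θprev X)

/-- The second moment `E[W_i²]` of the random variable `W_i = w_{θcur}(X)/w_{θprev}(X)`
where `X ∼ μ_{θprev}`. -/
noncomputable def EW2 {V ι : Type} [Fintype V] [DecidableEq V] [Fintype ι]
    (cl : ι → Clause V) (θprev θcur : ℝ) : ℝ :=
  ∑ X : V → Bool, (wt cl θprev X / partZ cl θprev) * (wt cl θcur X / wt cl θprev X) ^ 2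

/-! The first moment of `W_i` is `Z(θ_i)/Z(θ_{i-1})` and its second moment is
`Z(2θ_i - θ_{i-1})/Z(θ_{i-1}) = Z(θ_{i+1})/Z(θ_{i-1})` on the arithmetic schedule, so both
products telescope and the relative variance is `Z(θ_{ℓ+1}) Z(θ_0) / (Z(θ_ℓ) Z(θ_1)) - 1`.
`Z` is antitone in `θ`, and since no assignment violates more than `|C| ≤ dn` clauses, the step
`θ_0 → θ_1 = 1/(dn)` shrinks every weight by a factor of at most `e`. -/

theorem Finset.prod_Icc_one_div_pred {M : Type*} [CommGroupWithZero M] (f : ℕ → M)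
    (hf : ∀ i, f i ≠ 0) (m : ℕ) : ∏ i ∈ Icc 1 m, f i / f (i - 1) = f m / f 0 := by
  induction m with
  | zero => simp [div_self (hf 0)]
  | succ m ih =>
    rw [prod_Icc_succ_top (by omega), ih, Nat.add_sub_cancel,
      div_mul_div_comm, mul_comm, mul_div_mul_right _ _ (hf m)]

section Gibbs

variable {V ι : Type} [Fintype ι] (cl : ι → Clause V)

lemma wt_pos (θ : ℝ) (X : V → Bool) : 0 < wt cl θ X :=
  Real.exp_pos _

lemma numUnsat_le_card (X : V → Bool) : numUnsat cl X ≤ Fintype.card ι :=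
  card_filter_le _ _

variable [Fintype V] [DecidableEq V]

lemma partZ_pos (θ : ℝ) : 0 < partZ cl θ :=
  sum_pos (fun X _ => wt_pos cl θ X) univ_nonempty

lemma partZ_antitone : Antitone (partZ cl) := fun a b hab =>
  sum_le_sum fun X _ => Real.exp_le_exp.2 <|
    by nlinarith [(Nat.cast_nonneg (numUnsat cl X) : (0 : ℝ) ≤ _)]

lemma partZ_le_exp_mul_partZ {a b : ℝ} (hab : a ≤ b) :
    partZ cl a ≤ Real.exp ((b - a) * Fintype.card ι) * partZ cl b := by
  rw [partZ, partZ, mul_sum]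
  refine sum_le_sum fun X _ => ?_
  rw [wt, wt, ← Real.exp_add, Real.exp_le_exp]
  have hX : (numUnsat cl X : ℝ) ≤ Fintype.card ι := by exact_mod_cast numUnsat_le_card cl X
  nlinarith

lemma EW_eq_partZ_div (a b : ℝ) : EW cl a b = partZ cl b / partZ cl a := by
  rw [EW, show partZ cl b = ∑ X, wt cl b X from rfl, sum_div]
  refine sum_congr rfl fun X _ => ?_
  field_simp [(wt_pos cl a X).ne', (partZ_pos cl a).ne']

lemma EW2_eq_partZ_div (a b : ℝ) : EW2 cl a b = partZ cl (2 * b - a) / partZ cl a := by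
  have hsq : ∀ X, wt cl b X ^ 2 / wt cl a X = wt cl (2 * b - a) X := fun X => by
    rw [wt, wt, wt, sq, ← Real.exp_add, ← Real.exp_sub]
    ring_nf
  rw [EW2, show partZ cl (2 * b - a) = ∑ X, wt cl (2 * b - a) X from rfl, sum_div]
  refine sum_congr rfl fun X _ => ?_
  rw [← hsq]
  field_simp [(wt_pos cl a X).ne', (partZ_pos cl a).ne']

variable {θ : ℕ → ℝ} {c : ℝ}

lemma prod_EW_eq (ℓ : ℕ) :
    ∏ i ∈ Icc 1 ℓ, EW cl (θ (i - 1)) (θ i) = partZ cl (θ ℓ) / partZ cl (θ 0) := by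
  simp only [EW_eq_partZ_div]
  exact prod_Icc_one_div_pred (fun i => partZ cl (θ i)) (fun i => (partZ_pos cl _).ne') ℓ

lemma prod_EW2_eq (hθ : ∀ i : ℕ, θ i = i * c) (ℓ : ℕ) :
    ∏ i ∈ Icc 1 ℓ, EW2 cl (θ (i - 1)) (θ i)
      = partZ cl (θ (ℓ + 1)) * partZ cl (θ ℓ) / (partZ cl (θ 1) * partZ cl (θ 0)) := by
  set g : ℕ → ℝ := fun i => partZ cl (θ (i + 1)) * partZ cl (θ i)
  have hstep : ∀ i ∈ Icc 1 ℓ, EW2 cl (θ (i - 1)) (θ i) = g i / g (i - 1) := by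
    intro i hi
    have hi : 1 ≤ i := (mem_Icc.1 hi).1
    simp only [g, Nat.sub_add_cancel hi]
    rw [EW2_eq_partZ_div, mul_comm (partZ cl (θ i)), mul_div_mul_right _ _ (partZ_pos cl _).ne']
    congr 2
    rw [hθ, hθ, hθ, Nat.cast_sub hi]
    push_cast
    ring
  rw [prod_congr rfl hstep,
    prod_Icc_one_div_pred g (fun i => (mul_pos (partZ_pos cl _) (partZ_pos cl _)).ne')]

end Gibbs

theorem stmt_12_general {V ι : Type} [Fintype V] [DecidableEq V] [Fintype ι]
    (cl : ι → Clause V) (d : ℕ)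
    (hC : Fintype.card ι ≤ Fintype.card V * d)
    (θ : ℕ → ℝ) (hθ : ∀ i : ℕ, θ i = (i : ℝ) / (d * Fintype.card V)) :
    partZ cl (θ 0) / partZ cl (θ 1) ≤ Real.exp 1 ∧
    (∀ ℓ : ℕ, partZ cl (θ (ℓ + 1)) ≤ partZ cl (θ ℓ)) ∧
    ∀ ℓ : ℕ,
      ((4 ^ Fintype.card V * ∏ i ∈ Finset.Icc 1 ℓ, EW2 cl (θ (i - 1)) (θ i)) -
            (2 ^ Fintype.card V * ∏ i ∈ Finset.Icc 1 ℓ, EW cl (θ (i - 1)) (θ i)) ^ 2) /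
          (2 ^ Fintype.card V * ∏ i ∈ Finset.Icc 1 ℓ, EW cl (θ (i - 1)) (θ i)) ^ 2
        = partZ cl (θ (ℓ + 1)) * partZ cl (θ 0) / (partZ cl (θ ℓ) * partZ cl (θ 1)) - 1
      ∧ partZ cl (θ (ℓ + 1)) * partZ cl (θ 0) / (partZ cl (θ ℓ) * partZ cl (θ 1)) - 1
          ≤ Real.exp 1 - 1 := by
  set n := Fintype.card V
  have hθc : ∀ i : ℕ, θ i = i * (1 / (d * n)) := fun i => by rw [hθ, mul_one_div]
  have hZ := partZ_pos cl
  have hθmono : ∀ ℓ : ℕ, θ ℓ ≤ θ (ℓ + 1) := fun ℓ => by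
    rw [hθc, hθc]; gcongr; simp
  have hmono : ∀ ℓ : ℕ, partZ cl (θ (ℓ + 1)) ≤ partZ cl (θ ℓ) :=
    fun ℓ => partZ_antitone cl (hθmono ℓ)
  have hZ01 : partZ cl (θ 0) ≤ Real.exp 1 * partZ cl (θ 1) := by
    refine (partZ_le_exp_mul_partZ cl (hθmono 0)).trans ?_
    refine mul_le_mul_of_nonneg_right (Real.exp_le_exp.2 ?_) (hZ _).le
    rw [hθc, hθc, Nat.cast_one, Nat.cast_zero, one_mul, zero_mul, sub_zero, one_div_mul_eq_div]
    exact div_le_one_of_le₀ (by rw [mul_comm]; exact_mod_cast hC) (by positivity)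
  refine ⟨(div_le_iff₀ (hZ _)).2 hZ01, hmono, fun ℓ => ⟨?_, ?_⟩⟩
  · have h4 : (4 : ℝ) ^ n = ((2 : ℝ) ^ n) ^ 2 := by rw [← pow_mul, mul_comm, pow_mul]; norm_num
    rw [prod_EW_eq, prod_EW2_eq cl hθc, h4]
    field_simp [(hZ (θ 0)).ne', (hZ (θ 1)).ne', (hZ (θ ℓ)).ne']
  · rw [sub_le_sub_iff_right, div_le_iff₀ (mul_pos (hZ _) (hZ _))]
    calc partZ cl (θ (ℓ + 1)) * partZ cl (θ 0)
        ≤ partZ cl (θ ℓ) * (Real.exp 1 * partZ cl (θ 1)) :=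
          mul_le_mul (hmono ℓ) hZ01 (hZ _).le (hZ _).le
      _ = Real.exp 1 * (partZ cl (θ ℓ) * partZ cl (θ 1)) := by ring

/-- For a CNF formula `Φ = (V, C)` with `n = |V|` variables and
`|C| ≤ nd` clauses, `Z(θ_0)/Z(θ_1) ≤ e` and `Z(θ_{ℓ+1}) ≤ Z(θ_ℓ)` for every `ℓ ≥ 0`;
consequently the random variable `W = 2^n·Π_{i=1}^ℓ W_i` (with the `W_i` mutually
independent, so that `E[W] = 2^n·Π E[W_i]` and `E[W²] = 4^n·Π E[W_i²]`) satisfies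
`Var(W)/E[W]² = Z(θ_{ℓ+1})·Z(θ_0)/(Z(θ_ℓ)·Z(θ_1)) − 1 ≤ e − 1`. -/
theorem stmt_12 {V ι : Type} [Fintype V] [DecidableEq V] [Fintype ι]
    (cl : ι → Clause V) (d : ℕ)
    (hdeg : ∀ v : V, (Finset.univ.filter fun i => v ∈ (cl i).vars).card ≤ d)
    (hC : Fintype.card ι ≤ Fintype.card V * d)
    (θ : ℕ → ℝ) (hθ : ∀ i : ℕ, θ i = (i : ℝ) / (d * Fintype.card V)) :
    partZ cl (θ 0) / partZ cl (θ 1) ≤ Real.exp 1 ∧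
    (∀ ℓ : ℕ, partZ cl (θ (ℓ + 1)) ≤ partZ cl (θ ℓ)) ∧
    ∀ ℓ : ℕ,
      ((4 ^ Fintype.card V * ∏ i ∈ Finset.Icc 1 ℓ, EW2 cl (θ (i - 1)) (θ i)) -
            (2 ^ Fintype.card V * ∏ i ∈ Finset.Icc 1 ℓ, EW cl (θ (i - 1)) (θ i)) ^ 2) /
          (2 ^ Fintype.card V * ∏ i ∈ Finset.Icc 1 ℓ, EW cl (θ (i - 1)) (θ i)) ^ 2
        = partZ cl (θ (ℓ + 1)) * partZ cl (θ 0) / (partZ cl (θ ℓ) * partZ cl (θ 1)) - 1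
      ∧ partZ cl (θ (ℓ + 1)) * partZ cl (θ 0) / (partZ cl (θ ℓ) * partZ cl (θ 1)) - 1
          ≤ Real.exp 1 - 1 :=
  stmt_12_general cl d hC θ hθ
end

section
/- Let θ ≥ 0 and let Φ' = (V ∪ U, C') be the formula obtained from Φ by introducing, for each clause c ∈ C, a fresh Boolean variable u_c and replacing c by u_c ∨ c. Let P be the product distribution on {0,1}^{V ∪ U} in which each v ∈ V is uniform on {0,1} and each u_c independently takes value 1 with probability exp(−θ) and 0 with probability 1 − exp(−θ). Then for every X ∈ {0,1}^V, Pr_P[each v ∈ V takes value X(v) | every clause of C' is satisfied] = μ_θ(X). -/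
open Finset

/-- The product distribution `P` on assignments of `V ∪ U` (a pair of an assignment of
`V` and an assignment of the auxiliary variables `u_c`, one for each clause): each
`v ∈ V` is uniform on `{0,1}`, and each `u_c` independently takes value `1` with
probability `exp(−θ)` and `0` with probability `1 − exp(−θ)`. -/
noncomputable def prodP {V ι : Type} [Fintype V] [Fintype ι] (θ : ℝ)
    (p : (V → Bool) × (ι → Bool)) : ℝ :=
  (1 / 2 : ℝ) ^ Fintype.card V *
    ∏ i : ι, if p.2 i = true then Real.exp (-θ) else 1 - Real.exp (-θ)


lemma aux_inner_sum {V ι : Type} [Fintype ι] [DecidableEq ι] (cl : ι → Clause V) (θ : ℝ) (X : V → Bool) :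
    (∑ u ∈ Finset.univ.filter (fun u : ι → Bool => ∀ i, u i = true ∨ (cl i).sat X),
      ∏ i, (if u i = true then Real.exp (-θ) else 1 - Real.exp (-θ)))
    = wt cl θ X := by
  rw [Finset.sum_filter]
  have key : ∀ u : ι → Bool,
      (if (∀ i, u i = true ∨ (cl i).sat X) then
        ∏ i, (if u i = true then Real.exp (-θ) else 1 - Real.exp (-θ)) else 0)
      = ∏ i, (if (u i = true ∨ (cl i).sat X)
          then (if u i = true then Real.exp (-θ) else 1 - Real.exp (-θ)) else 0) := by
    intro u
    by_cases h : ∀ i, u i = true ∨ (cl i).sat X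
    · rw [if_pos h]
      exact Finset.prod_congr rfl fun i _ => (if_pos (h i)).symm
    · rw [if_neg h]
      push_neg at h
      obtain ⟨i, hi1, hi2⟩ := h
      refine (Finset.prod_eq_zero (Finset.mem_univ i) ?_).symm
      rw [if_neg]
      push_neg
      exact ⟨hi1, hi2⟩
  rw [Finset.sum_congr rfl fun u _ => key u]
  have := Finset.prod_univ_sum (fun _ : ι => (Finset.univ : Finset Bool))
    (fun i b => if (b = true ∨ (cl i).sat X)
          then (if b = true then Real.exp (-θ) else 1 - Real.exp (-θ)) else 0)
  rw [Fintype.piFinset_univ] at this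
  rw [← this]
  have step : ∀ i : ι, (∑ b : Bool, if (b = true ∨ (cl i).sat X)
          then (if b = true then Real.exp (-θ) else 1 - Real.exp (-θ)) else 0)
      = if (cl i).sat X then 1 else Real.exp (-θ) := by
    intro i
    by_cases h : (cl i).sat X <;> simp [Fintype.sum_bool, h]
  rw [Finset.prod_congr rfl fun i _ => step i, Finset.prod_ite, Finset.prod_const,
    Finset.prod_const, one_pow, one_mul, wt, numUnsat]
  rw [← Real.exp_nat_mul]
  ring_nf

/-- Let `θ ≥ 0` and let `Φ' = (V ∪ U, C')` be obtained from `Φ` by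
introducing, for each clause `c`, a fresh variable `u_c` and replacing `c` by `u_c ∨ c`.
Under the product distribution `P` above, for every `X₀ ∈ {0,1}^V`, the conditional
probability that each `v ∈ V` takes the value `X₀(v)`, given that every clause of `C'`
is satisfied, equals `μ_θ(X₀) = w_θ(X₀)/Z(θ)`. -/
theorem stmt_14 {V ι : Type} [Fintype V] [DecidableEq V] [Fintype ι] [DecidableEq ι]
    (cl : ι → Clause V) (θ : ℝ) (hθ : 0 ≤ θ) (X₀ : V → Bool) :
    (∑ p ∈ Finset.univ.filter (fun p : (V → Bool) × (ι → Bool) =>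
          p.1 = X₀ ∧ ∀ i, p.2 i = true ∨ (cl i).sat p.1), prodP θ p) /
      (∑ p ∈ Finset.univ.filter (fun p : (V → Bool) × (ι → Bool) =>
          ∀ i, p.2 i = true ∨ (cl i).sat p.1), prodP θ p)
      = wt cl θ X₀ / partZ cl θ := by
  set c : ℝ := (1 / 2 : ℝ) ^ Fintype.card V with hc
  have hcne : c ≠ 0 := pow_ne_zero _ (by norm_num)
  have hx : ∀ x : V → Bool,
      (∑ u : ι → Bool, if (∀ i, u i = true ∨ (cl i).sat x) then prodP θ (x, u) else 0)
      = c * wt cl θ x := by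
    intro x
    rw [← Finset.sum_filter]
    have : ∀ u ∈ Finset.univ.filter (fun u : ι → Bool => ∀ i, u i = true ∨ (cl i).sat x),
        prodP θ (x, u) = c * ∏ i, (if u i = true then Real.exp (-θ) else 1 - Real.exp (-θ)) :=
      fun u _ => rfl
    rw [Finset.sum_congr rfl this, ← Finset.mul_sum, aux_inner_sum cl θ x]
  have hnum : (∑ p ∈ Finset.univ.filter (fun p : (V → Bool) × (ι → Bool) =>
          p.1 = X₀ ∧ ∀ i, p.2 i = true ∨ (cl i).sat p.1), prodP θ p) = c * wt cl θ X₀ := by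
    rw [Finset.sum_filter, Fintype.sum_prod_type]
    rw [Finset.sum_eq_single X₀]
    · rw [← hx X₀]
      exact Finset.sum_congr rfl fun u _ => by simp
    · intro x _ hxne
      apply Finset.sum_eq_zero
      intro u _
      simp [hxne]
    · intro h; exact absurd (Finset.mem_univ X₀) h
  have hden : (∑ p ∈ Finset.univ.filter (fun p : (V → Bool) × (ι → Bool) =>
          ∀ i, p.2 i = true ∨ (cl i).sat p.1), prodP θ p) = c * partZ cl θ := by
    rw [Finset.sum_filter, Fintype.sum_prod_type]
    rw [Finset.sum_congr rfl fun x _ => hx x, ← Finset.mul_sum]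
    rfl
  rw [hnum, hden, mul_div_mul_left _ _ hcne]
end

section
/- Suppose 2^{k_β} ≥ 2eds for some s ≥ k. Then for every marked variable v ∈ M, every partial assignment X' ∈ {0,1}^{M\{v}} of the other marked variables, and every value c ∈ {0,1}, the conditional marginal satisfies μ_v(c | X') ≤ (1/2)·exp(1/s). -/
open Finset

/-- The set of satisfying assignments of the CNF formula whose clauses are the `cl i`. -/
def satSet {V ι : Type} [Fintype V] [DecidableEq V] [Fintype ι]
    (cl : ι → Clause V) : Finset (V → Bool) :=
  Finset.univ.filter fun X => ∀ i, (cl i).sat X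

/-- The marginal probability `μ_M(σ)` that a uniformly random satisfying assignment
agrees with `σ` on the marked set `M`. -/
noncomputable def muM {V ι : Type} [Fintype V] [DecidableEq V] [Fintype ι]
    (cl : ι → Clause V) (M : Finset V) (σ : {v // v ∈ M} → Bool) : ℝ :=
  (((satSet cl).filter fun X => ∀ v : {v // v ∈ M}, X v.1 = σ v).card : ℝ) /
    ((satSet cl).card : ℝ)

/-- The satisfying assignments agreeing with `σ` on `M \ {v}`. -/
def condSet {V ι : Type} [Fintype V] [DecidableEq V] [Fintype ι]
    (cl : ι → Clause V) (M : Finset V) (σ : {v // v ∈ M} → Bool)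
    (v : {v // v ∈ M}) : Finset (V → Bool) :=
  (satSet cl).filter fun X => ∀ u : {v // v ∈ M}, u ≠ v → X u.1 = σ u

/-- The conditional marginal probability `μ_v(b | σ(M \ {v}))` that, conditioned on a
uniformly random satisfying assignment agreeing with `σ` on `M \ {v}`, the variable `v`
takes the value `b`. -/
noncomputable def margin {V ι : Type} [Fintype V] [DecidableEq V] [Fintype ι]
    (cl : ι → Clause V) (M : Finset V) (σ : {v // v ∈ M} → Bool)
    (v : {v // v ∈ M}) (b : Bool) : ℝ :=
  (((condSet cl M σ v).filter fun X => X v.1 = b).card : ℝ) /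
    ((condSet cl M σ v).card : ℝ)

/-- The transition matrix of the (idealized) Glauber dynamics on assignments of the
marked variables `M`: pick `v ∈ M` uniformly at random, keep the values on `M \ {v}`,
and resample the value at `v` from the conditional marginal `μ_v(· | σ(M \ {v}))`. -/
noncomputable def glauber {V ι : Type} [Fintype V] [DecidableEq V] [Fintype ι]
    (cl : ι → Clause V) (M : Finset V) :
    Matrix ({v // v ∈ M} → Bool) ({v // v ∈ M} → Bool) ℝ :=
  fun σ τ => (1 / (M.card : ℝ)) *
    ∑ v : {v // v ∈ M},
      if ∀ u : {v // v ∈ M}, u ≠ v → τ u = σ u then margin cl M σ v (τ v) else 0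

/-!
Fix the marked values off `v` and regard the other variables as independent fair bits. A clause
is then violated with probability at most `2^{-kβ}`, since its at least `kβ` unmarked variables
must all take the wrong sign. The counting form of the symmetric local lemma, with
`x = 2^{1-kβ}` and `k d` dependent clauses per clause, shows that conditioned on any set of clauses
being satisfied, a further clause fails with probability at most `x`. Dropping the at most `d`
clauses containing `v` therefore multiplies the number of satisfying extensions by at most
`(1 - x)^{-d} ≤ e^{1/s}`, and once they are dropped the value at `v` is a fair coin.
-/

open Real

section LocalLemma

variable {Ω ι : Type*}

def goodSet (Ω₀ : Finset Ω) (G : ι → Ω → Prop) [∀ i, DecidablePred (G i)] (S : Finset ι) :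
    Finset Ω :=
  Ω₀.filter fun ω => ∀ j ∈ S, G j ω

variable {Ω₀ : Finset Ω} {G : ι → Ω → Prop} [∀ i, DecidablePred (G i)]

lemma goodSet_anti {S T : Finset ι} (h : S ⊆ T) : goodSet Ω₀ G T ⊆ goodSet Ω₀ G S :=
  monotone_filter_right _ fun _ _ hω j hj => hω j (h hj)

variable [DecidableEq ι]

lemma card_goodSet_insert (a : ι) (S : Finset ι) :
    (#(goodSet Ω₀ G (insert a S)) : ℝ)
      = #(goodSet Ω₀ G S) - #((goodSet Ω₀ G S).filter (¬ G a ·)) := by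
  have h : goodSet Ω₀ G (insert a S) = (goodSet Ω₀ G S).filter (G a) := by
    ext ω
    simp only [goodSet, mem_filter, forall_mem_insert]
    tauto
  rw [h, ← card_filter_add_card_filter_not (s := goodSet Ω₀ G S) (G a)]
  push_cast
  ring

lemma pow_mul_card_goodSet_le_card_goodSet_union {x : ℝ} (hx : x ≤ 1) {S T : Finset ι}
    (hTS : Disjoint T S)
    (hbad : ∀ a ∈ T, ∀ W ⊆ S ∪ T, a ∉ W →
      (#((goodSet Ω₀ G W).filter (¬ G a ·)) : ℝ) ≤ x * #(goodSet Ω₀ G W)) :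
    (1 - x) ^ #T * #(goodSet Ω₀ G S) ≤ #(goodSet Ω₀ G (S ∪ T)) := by
  induction T using Finset.induction_on with
  | empty => simp
  | insert a T haT ih =>
    rw [disjoint_insert_left] at hTS
    have hST : S ∪ T ⊆ S ∪ insert a T := union_subset_union_right (subset_insert a T)
    have ih' := ih hTS.2 fun b hb W hW => hbad b (mem_insert_of_mem hb) W (hW.trans hST)
    have hstep := hbad a (mem_insert_self a T) (S ∪ T) hST (by simp [haT, hTS.1])
    rw [union_insert, card_goodSet_insert, card_insert_of_notMem haT, pow_succ]
    nlinarith [mul_le_mul_of_nonneg_left ih' (sub_nonneg.mpr hx)]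

/-- The symmetric Lovász local lemma in counting form: `Γ i` plays the role of the dependency
neighbourhood of `i`, and `hindep` is the (lopsided) independence hypothesis. -/
theorem card_filter_not_goodSet_le {Γ : ι → Finset ι} {D : ℕ} {p x : ℝ} (hx₀ : 0 ≤ x)
    (hx₁ : x ≤ 1) (hΓ : ∀ i, #(Γ i) ≤ D) (hpx : p ≤ x * (1 - x) ^ D)
    (hindep : ∀ i S, Disjoint S (Γ i) →
      (#((goodSet Ω₀ G S).filter (¬ G i ·)) : ℝ) ≤ p * #(goodSet Ω₀ G S))
    (S : Finset ι) (i : ι) :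
    (#((goodSet Ω₀ G S).filter (¬ G i ·)) : ℝ) ≤ x * #(goodSet Ω₀ G S) := by
  induction S using Finset.strongInduction generalizing i with
  | H S ih =>
  -- Split off the events of `S` that depend on `i`; by induction each removes at most an
  -- `x`-fraction of what is left.
  have hunion : S \ Γ i ∪ S ∩ Γ i = S := sdiff_union_inter S (Γ i)
  have hpeel : (1 - x) ^ #(S ∩ Γ i) * #(goodSet Ω₀ G (S \ Γ i)) ≤ #(goodSet Ω₀ G S) := by
    have := pow_mul_card_goodSet_le_card_goodSet_union hx₁ (disjoint_sdiff_inter S (Γ i)).symm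
      fun a ha W hW haW => ih W ((ssubset_iff_of_subset (hunion ▸ hW)).mpr
        ⟨a, mem_of_mem_inter_left ha, haW⟩) a
    rwa [hunion] at this
  have hD : (1 - x) ^ D ≤ (1 - x) ^ #(S ∩ Γ i) :=
    pow_le_pow_of_le_one (by linarith) (by linarith)
      ((card_le_card inter_subset_right).trans (hΓ i))
  calc (#((goodSet Ω₀ G S).filter (¬ G i ·)) : ℝ)
      ≤ #((goodSet Ω₀ G (S \ Γ i)).filter (¬ G i ·)) := by
        exact_mod_cast card_le_card (filter_subset_filter _ (goodSet_anti sdiff_subset))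
    _ ≤ p * #(goodSet Ω₀ G (S \ Γ i)) := hindep i _ sdiff_disjoint
    _ ≤ x * ((1 - x) ^ #(S ∩ Γ i) * #(goodSet Ω₀ G (S \ Γ i))) := by
        rw [← mul_assoc]; gcongr; exact hpx.trans (by gcongr)
    _ ≤ x * #(goodSet Ω₀ G S) := by gcongr

end LocalLemma

section Cube

variable {V : Type*} [Fintype V] [DecidableEq V]

def cube (F : Finset V) (g : V → Bool) : Finset (V → Bool) :=
  Fintype.piFinset fun u => if u ∈ F then {g u} else univ

variable {F : Finset V} {g : V → Bool}

lemma mem_cube {X : V → Bool} : X ∈ cube F g ↔ ∀ u ∈ F, X u = g u := by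
  simp only [cube, Fintype.mem_piFinset]
  refine ⟨fun h u hu => by simpa [hu] using h u, fun h u => ?_⟩
  split_ifs with hu <;> simp [h, hu]

lemma card_cube : #(cube F g) = 2 ^ #Fᶜ := by
  simp only [cube, Fintype.card_piFinset, apply_ite card, card_singleton, card_univ,
    Fintype.card_bool, prod_ite, prod_const_one, one_mul, prod_const]
  congr 2
  ext u
  simp

lemma filter_cube_eq_cube_union {T : Finset V} (hTF : Disjoint T F) (f : V → Bool) :
    (cube F g).filter (fun X => ∀ u ∈ T, X u = f u) = cube (F ∪ T) (T.piecewise f g) := by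
  ext X
  simp only [mem_filter, mem_cube, mem_union]
  constructor
  · rintro ⟨hF, hT⟩ u (hu | hu)
    · rw [piecewise_eq_of_notMem _ _ _ (disjoint_right.mp hTF hu), hF u hu]
    · rw [piecewise_eq_of_mem _ _ _ hu, hT u hu]
  · intro h
    refine ⟨fun u hu => ?_, fun u hu => ?_⟩
    · rw [h u (.inl hu), piecewise_eq_of_notMem _ _ _ (disjoint_right.mp hTF hu)]
    · rw [h u (.inr hu), piecewise_eq_of_mem _ _ _ hu]

lemma two_pow_mul_card_filter_cube {T : Finset V} (hTF : Disjoint T F) (f : V → Bool) :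
    2 ^ #T * #((cube F g).filter fun X => ∀ u ∈ T, X u = f u) = #(cube F g) := by
  rw [filter_cube_eq_cube_union hTF, card_cube, card_cube, ← pow_add, card_compl, card_compl,
    card_union_of_disjoint hTF.symm]
  have := card_le_univ (F ∪ T)
  rw [card_union_of_disjoint hTF.symm] at this
  congr 1
  omega

lemma card_filter_and_mul_card_cube {A B : Finset V} (hAB : Disjoint A B)
    {P Q : (V → Bool) → Prop} [DecidablePred P] [DecidablePred Q]
    (hP : DependsOn P A) (hQ : DependsOn Q B) :
    #((cube F g).filter fun X => P X ∧ Q X) * #(cube F g)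
      = #((cube F g).filter P) * #((cube F g).filter Q) := by
  have piecewise_mem {X Y} (hX : X ∈ cube F g) (hY : Y ∈ cube F g) :
      A.piecewise X Y ∈ cube F g := by
    rw [mem_cube] at *
    intro u hu
    by_cases huA : u ∈ A <;> simp [huA, hX u hu, hY u hu]
  have agree_left (X Y : V → Bool) : ∀ u ∈ (A : Set V), A.piecewise X Y u = X u :=
    fun u hu => piecewise_eq_of_mem _ _ _ hu
  have agree_right (X Y : V → Bool) : ∀ u ∈ (B : Set V), A.piecewise X Y u = Y u :=
    fun u hu => piecewise_eq_of_notMem _ _ _ (disjoint_right.mp hAB hu)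
  have swap_swap (X Y : V → Bool) : A.piecewise (A.piecewise X Y) (A.piecewise Y X) = X := by
    ext u; by_cases hu : u ∈ A <;> simp [hu]
  -- Exchanging the coordinates in `A` between two points of the cube is an involution.
  rw [← card_product, ← card_product]
  refine card_nbij' (fun p => (A.piecewise p.1 p.2, A.piecewise p.2 p.1))
    (fun p => (A.piecewise p.1 p.2, A.piecewise p.2 p.1)) ?_ ?_ ?_ ?_
  · rintro ⟨X, Y⟩ h
    simp only [coe_product, coe_filter, Set.mem_prod, Set.mem_ofPred_eq, mem_coe] at h ⊢
    obtain ⟨⟨hX, hPX, hQX⟩, hY⟩ := h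
    exact ⟨⟨piecewise_mem hX hY, (hP (agree_left X Y)).mpr hPX⟩,
      piecewise_mem hY hX, (hQ (agree_right Y X)).mpr hQX⟩
  · rintro ⟨Z, W⟩ h
    simp only [coe_product, coe_filter, Set.mem_prod, Set.mem_ofPred_eq, mem_coe] at h ⊢
    obtain ⟨⟨hZ, hPZ⟩, hW, hQW⟩ := h
    exact ⟨⟨piecewise_mem hZ hW, (hP (agree_left Z W)).mpr hPZ,
      (hQ (agree_right Z W)).mpr hQW⟩, piecewise_mem hW hZ⟩
  · rintro ⟨X, Y⟩ -
    simp only [swap_swap]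
  · rintro ⟨X, Y⟩ -
    simp only [swap_swap]

end Cube

section Events

variable {V ι : Type*} {vars : ι → Finset V} {G : ι → (V → Bool) → Prop}

lemma dependsOn_forall_mem [DecidableEq V] (hG : ∀ j, DependsOn (G j) (vars j))
    (S : Finset ι) : DependsOn (fun X => ∀ j ∈ S, G j X) (S.biUnion vars) := fun _ _ h =>
  propext <| forall₂_congr fun j hj => Iff.of_eq <|
    hG j fun u hu => h u (by simpa using ⟨j, hj, hu⟩)

variable [Fintype V] [DecidableEq V] [∀ i, DecidablePred (G i)] {F : Finset V} {g : V → Bool}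

lemma card_filter_not_goodSet_mul_card_cube (hG : ∀ j, DependsOn (G j) (vars j)) {i : ι}
    {S : Finset ι} (hS : ∀ j ∈ S, Disjoint (vars j) (vars i)) :
    #((goodSet (cube F g) G S).filter (¬ G i ·)) * #(cube F g)
      = #(goodSet (cube F g) G S) * #((cube F g).filter (¬ G i ·)) := by
  rw [goodSet, filter_filter]
  exact card_filter_and_mul_card_cube (disjoint_biUnion_left _ _ _ |>.mpr hS)
    (dependsOn_forall_mem hG S) fun _ _ h => congrArg Not (hG i h)

lemma two_mul_card_filter_goodSet_eq (hG : ∀ j, DependsOn (G j) (vars j)) {w : V} (hw : w ∉ F)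
    {S : Finset ι} (hS : ∀ j ∈ S, w ∉ vars j) (b : Bool) :
    2 * #((goodSet (cube F g) G S).filter (· w = b)) = #(goodSet (cube F g) G S) := by
  have hindep : #((goodSet (cube F g) G S).filter (· w = b)) * #(cube F g)
      = #(goodSet (cube F g) G S) * #((cube F g).filter (· w = b)) := by
    rw [goodSet, filter_filter]
    exact card_filter_and_mul_card_cube (B := {w})
      (disjoint_biUnion_left _ _ _ |>.mpr fun j hj => disjoint_singleton_right.mpr (hS j hj))
      (dependsOn_forall_mem hG S) fun _ _ h => by simp [h w (by simp)]
  have hcoin : 2 * #((cube F g).filter (· w = b)) = #(cube F g) := by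
    simpa using two_pow_mul_card_filter_cube (g := g) (disjoint_singleton_left.mpr hw) fun _ => b
  have hcube : 0 < #(cube F g) := card_cube (F := F) (g := g) ▸ by positivity
  refine Nat.eq_of_mul_eq_mul_right hcube ?_
  rw [mul_assoc, hindep, ← hcoin]
  ring

end Events

section Estimates

lemma exp_neg_le_one_sub_div_exp_one {t : ℝ} (ht₀ : 0 ≤ t) (ht₁ : t ≤ 1) :
    exp (-t) ≤ 1 - t / exp 1 := by
  have he : 1 + t ≤ exp 1 := by linarith [exp_one_gt_d9]
  have hu : t / exp 1 * exp 1 = t := div_mul_cancel₀ t (exp_pos 1).ne'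
  have hu₀ : 0 ≤ t / exp 1 := by positivity
  calc exp (-t) = (exp t)⁻¹ := exp_neg t
    _ ≤ (1 + t)⁻¹ := inv_anti₀ (by positivity) (by linarith [add_one_le_exp t])
    _ ≤ 1 - t / exp 1 := by
      rw [inv_le_iff_one_le_mul₀ (by positivity)]
      nlinarith [mul_le_mul_of_nonneg_left he hu₀]

lemma one_sub_mul_le_one_sub_pow {x : ℝ} (hx : x ≤ 2) (n : ℕ) : 1 - n * x ≤ (1 - x) ^ n := by
  simpa using one_add_mul_sub_le_pow (a := 1 - x) (by linarith) n

lemma exp_neg_inv_le_one_sub_pow {x s : ℝ} {d : ℕ} (hx : x ≤ 1) (hs : 1 ≤ s)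
    (hxds : x * (exp 1 * d * s) ≤ 1) : exp (-(1 / s)) ≤ (1 - x) ^ d := by
  have hdx : d * x ≤ 1 / s / exp 1 := by
    rw [div_div, le_div_iff₀ (by positivity)]
    linarith
  calc exp (-(1 / s)) ≤ 1 - 1 / s / exp 1 :=
        exp_neg_le_one_sub_div_exp_one (by positivity) (div_le_one_of_le₀ hs (by positivity))
    _ ≤ 1 - d * x := by linarith
    _ ≤ (1 - x) ^ d := one_sub_mul_le_one_sub_pow (by linarith) d

lemma half_le_one_sub_pow {x s : ℝ} {k d : ℕ} (hx : x ≤ 1) (hs : 0 < s)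
    (hks : k ≤ s) (hxds : x * (exp 1 * d * s) ≤ 1) : 1 / 2 ≤ (1 - x) ^ (k * d) := by
  have hkdx : (k * d * x) * exp 1 ≤ 1 := by
    refine le_of_mul_le_mul_right ?_ hs
    nlinarith [mul_le_mul_of_nonneg_left hxds (Nat.cast_nonneg (α := ℝ) k)]
  have : k * d * x ≤ 1 / 2 := by
    nlinarith [exp_one_gt_d9]
  calc (1 : ℝ) / 2 ≤ 1 - ((k * d : ℕ) : ℝ) * x := by push_cast; linarith
    _ ≤ (1 - x) ^ (k * d) := one_sub_mul_le_one_sub_pow (by linarith) _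

lemma div_le_half_mul_inv {a m n c : ℝ} (ha : 0 ≤ a) (hc : 0 < c) (ham : 2 * a ≤ m)
    (hmn : c * m ≤ n) : a / n ≤ 1 / 2 * c⁻¹ := by
  rcases le_or_gt n 0 with hn | hn
  · exact (div_nonpos_of_nonneg_of_nonpos ha hn).trans (by positivity)
  · have : m ≤ c⁻¹ * n := (le_inv_mul_iff₀ hc).mpr hmn
    rw [div_le_iff₀ hn]
    linarith

end Estimates

section Formula

variable {V ι : Type}

lemma Clause.dependsOn_sat (c : Clause V) : DependsOn c.sat c.vars := fun _ _ h =>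
  propext <| exists_congr fun u => and_congr_right fun hu => by rw [h u hu]

variable [DecidableEq V]

def dependencyNbhd [Fintype ι] (cl : ι → Clause V) (i : ι) : Finset ι :=
  univ.filter fun j => ¬ Disjoint (cl j).vars (cl i).vars

lemma card_dependencyNbhd_le [Fintype ι] [DecidableEq ι] (cl : ι → Clause V) {k d : ℕ}
    (hk : ∀ i, #(cl i).vars = k) (hdeg : ∀ v, #(univ.filter fun i => v ∈ (cl i).vars) ≤ d)
    (i : ι) : #(dependencyNbhd cl i) ≤ k * d :=
  calc #(dependencyNbhd cl i)
      ≤ #((cl i).vars.biUnion fun u => univ.filter fun j => u ∈ (cl j).vars) := by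
        refine card_le_card fun j hj => ?_
        obtain ⟨u, huj, hui⟩ := not_disjoint_iff.mp (mem_filter.mp hj).2
        exact mem_biUnion.mpr ⟨u, hui, by simpa using huj⟩
    _ ≤ ∑ u ∈ (cl i).vars, #(univ.filter fun j => u ∈ (cl j).vars) := card_biUnion_le
    _ ≤ ∑ _u ∈ (cl i).vars, d := sum_le_sum fun u _ => hdeg u
    _ = k * d := by rw [sum_const, hk i, smul_eq_mul]

variable [Fintype V]

lemma two_pow_mul_card_filter_not_sat_cube_le (c : Clause V) (F : Finset V) (g : V → Bool) :
    2 ^ #(c.vars \ F) * #((cube F g).filter (¬ c.sat ·)) ≤ #(cube F g) :=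
  calc _ ≤ 2 ^ #(c.vars \ F) * #((cube F g).filter fun X => ∀ u ∈ c.vars \ F, X u = !c.sign u) :=
        Nat.mul_le_mul_left _ <| card_le_card <| monotone_filter_right _ fun _ _ hX u hu =>
          Bool.eq_not_iff.mpr fun h => hX ⟨u, (mem_sdiff.mp hu).1, h⟩
    _ = _ := two_pow_mul_card_filter_cube sdiff_disjoint _

lemma condSet_eq_goodSet [Fintype ι] (cl : ι → Clause V) (M : Finset V)
    (σ : {v // v ∈ M} → Bool) (v : {v // v ∈ M}) :
    condSet cl M σ v
      = goodSet (cube (M.erase v.1) fun u => if h : u ∈ M then σ ⟨u, h⟩ else false)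
          (fun j => (cl j).sat) univ := by
  ext X
  simp only [condSet, satSet, goodSet, mem_filter, mem_cube, mem_univ, true_and, forall_const]
  refine ⟨fun ⟨hsat, hσ⟩ => ⟨fun u hu => ?_, hsat⟩, fun ⟨hσ, hsat⟩ => ⟨hsat, fun u hu => ?_⟩⟩
  · obtain ⟨huv, huM⟩ := mem_erase.mp hu
    rw [dif_pos huM]
    exact hσ ⟨u, huM⟩ fun h => huv (congrArg Subtype.val h)
  · rw [hσ u (mem_erase.mpr ⟨fun h => hu (Subtype.ext h), u.2⟩), dif_pos u.2]

variable [Fintype ι] [DecidableEq ι] (cl : ι → Clause V) {F : Finset V} {g : V → Bool}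
  {k d kβ : ℕ} (hk : ∀ i, #(cl i).vars = k)
  (hdeg : ∀ v, #(univ.filter fun i => v ∈ (cl i).vars) ≤ d)
  (hβ : ∀ i, kβ ≤ #((cl i).vars \ F))
include hk hdeg hβ

lemma card_filter_not_sat_goodSet_le {x : ℝ} (hx₀ : 0 ≤ x) (hx₁ : x ≤ 1)
    (hpx : ((2 : ℝ) ^ kβ)⁻¹ ≤ x * (1 - x) ^ (k * d)) (S : Finset ι) (i : ι) :
    (#((goodSet (cube F g) (fun j => (cl j).sat) S).filter (¬ (cl i).sat ·)) : ℝ)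
      ≤ x * #(goodSet (cube F g) (fun j => (cl j).sat) S) := by
  refine card_filter_not_goodSet_le hx₀ hx₁ (card_dependencyNbhd_le cl hk hdeg) hpx
    (fun i S hS => ?_) S i
  have hindep := card_filter_not_goodSet_mul_card_cube (F := F) (g := g)
    (fun j => (cl j).dependsOn_sat) (i := i) fun j hj => not_not.mp fun h =>
      disjoint_left.mp hS hj (mem_filter.mpr ⟨mem_univ j, h⟩)
  have hbad : 2 ^ kβ * #((cube F g).filter (¬ (cl i).sat ·)) ≤ #(cube F g) :=
    (Nat.mul_le_mul_right _ (Nat.pow_le_pow_right two_pos (hβ i))).trans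
      (two_pow_mul_card_filter_not_sat_cube_le (cl i) F g)
  have hcube : 0 < #(cube F g) := card_cube (F := F) (g := g) ▸ by positivity
  have : 2 ^ kβ * #((goodSet (cube F g) (fun j => (cl j).sat) S).filter (¬ (cl i).sat ·))
      ≤ #(goodSet (cube F g) (fun j => (cl j).sat) S) := by
    refine le_of_mul_le_mul_right ?_ hcube
    calc _ = #(goodSet (cube F g) (fun j => (cl j).sat) S)
          * (2 ^ kβ * #((cube F g).filter (¬ (cl i).sat ·))) := by rw [mul_assoc, hindep]; ring
      _ ≤ _ := Nat.mul_le_mul_left _ hbad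
  rw [le_inv_mul_iff₀ (by positivity)]
  exact_mod_cast this

lemma exp_neg_inv_mul_card_goodSet_le {s : ℝ} (hs : k ≤ s)
    (hcond : 2 * exp 1 * d * s ≤ 2 ^ kβ) (w : V) :
    exp (-(1 / s)) * #(goodSet (cube F g) (fun j => (cl j).sat)
        (univ.filter fun j => w ∉ (cl j).vars))
      ≤ #(goodSet (cube F g) (fun j => (cl j).sat) univ) := by
  set S₁ := univ.filter fun j => w ∈ (cl j).vars
  set S₂ := univ.filter fun j => w ∉ (cl j).vars
  have hunion : S₂ ∪ S₁ = univ := by rw [union_comm]; exact filter_union_filter_not_eq _ _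
  rcases S₁.eq_empty_or_nonempty with hS₁ | ⟨j, hj⟩
  · rw [← hunion, hS₁, union_empty]
    refine mul_le_of_le_one_left (Nat.cast_nonneg _) (exp_le_one_iff.mpr ?_)
    have : (0 : ℝ) ≤ s := (Nat.cast_nonneg k).trans hs
    simpa using this
  have hd : 1 ≤ d := (card_pos.mpr ⟨j, hj⟩).trans_le (hdeg w)
  have hk₁ : 1 ≤ k := hk j ▸ card_pos.mpr ⟨w, (mem_filter.mp hj).2⟩
  have hs₁ : (1 : ℝ) ≤ s := le_trans (by exact_mod_cast hk₁) hs
  set x : ℝ := 2 / 2 ^ kβ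
  have hxds : x * (exp 1 * d * s) ≤ 1 := by
    rw [div_mul_eq_mul_div, div_le_one (by positivity)]
    linarith
  have hx₀ : 0 ≤ x := by positivity
  have hx₁ : x ≤ 1 := by
    have : (1 : ℝ) ≤ exp 1 * d * s :=
      one_le_mul_of_one_le_of_one_le (one_le_mul_of_one_le_of_one_le
        (one_le_exp zero_le_one) (by exact_mod_cast hd)) hs₁
    nlinarith
  have hpx : ((2 : ℝ) ^ kβ)⁻¹ ≤ x * (1 - x) ^ (k * d) :=
    calc ((2 : ℝ) ^ kβ)⁻¹ = x * (1 / 2) := by ring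
      _ ≤ x * (1 - x) ^ (k * d) := by
        gcongr; exact half_le_one_sub_pow hx₁ (by linarith) hs hxds
  have hpeel := pow_mul_card_goodSet_le_card_goodSet_union hx₁
    (disjoint_filter_filter_not univ univ fun j => w ∈ (cl j).vars) fun a _ W _ _ =>
      card_filter_not_sat_goodSet_le cl (g := g) hk hdeg hβ hx₀ hx₁ hpx W a
  rw [hunion] at hpeel
  calc exp (-(1 / s)) * #(goodSet (cube F g) (fun j => (cl j).sat) S₂)
      ≤ (1 - x) ^ d * #(goodSet (cube F g) (fun j => (cl j).sat) S₂) := by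
        gcongr; exact exp_neg_inv_le_one_sub_pow hx₁ hs₁ hxds
    _ ≤ (1 - x) ^ #S₁ * #(goodSet (cube F g) (fun j => (cl j).sat) S₂) :=
        mul_le_mul_of_nonneg_right (pow_le_pow_of_le_one (by linarith) (by linarith) (hdeg w))
          (Nat.cast_nonneg _)
    _ ≤ _ := hpeel

lemma card_filter_goodSet_div_le {s : ℝ} (hs : k ≤ s) (hcond : 2 * exp 1 * d * s ≤ 2 ^ kβ)
    {w : V} (hw : w ∉ F) (b : Bool) :
    (#((goodSet (cube F g) (fun j => (cl j).sat) univ).filter (· w = b)) : ℝ)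
        / #(goodSet (cube F g) (fun j => (cl j).sat) univ)
      ≤ 1 / 2 * exp (1 / s) := by
  have hcoin := two_mul_card_filter_goodSet_eq (g := g) (fun j => (cl j).dependsOn_sat) hw
    (S := univ.filter fun j => w ∉ (cl j).vars) (fun j hj => (mem_filter.mp hj).2) b
  have hmono := card_le_card <| filter_subset_filter (· w = b) <|
    goodSet_anti (Ω₀ := cube F g) (G := fun j => (cl j).sat)
      (subset_univ (univ.filter fun j => w ∉ (cl j).vars))
  rw [← inv_inv (exp _), ← exp_neg]
  exact div_le_half_mul_inv (Nat.cast_nonneg _) (exp_pos _)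
    (by exact_mod_cast (Nat.mul_le_mul_left 2 hmono).trans hcoin.le)
    (exp_neg_inv_mul_card_goodSet_le cl hk hdeg hβ hs hcond w)

end Formula

/-- Suppose `2^{k_β} ≥ 2eds` for some `s ≥ k`.  Then for every marked
variable `v ∈ M`, every assignment of the other marked variables (represented by a full
assignment `σ` of `M`, whose value at `v` is irrelevant to `margin`), and every value
`b ∈ {0,1}`, the conditional marginal satisfies `μ_v(b | σ(M\{v})) ≤ (1/2)·exp(1/s)`. -/
theorem stmt_15 {V ι : Type} [Fintype V] [DecidableEq V] [Fintype ι]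
    (cl : ι → Clause V) (k d kα kβ : ℕ)
    (hk : ∀ i, (cl i).vars.card = k)
    (hdeg : ∀ v : V, (Finset.univ.filter fun i => v ∈ (cl i).vars).card ≤ d)
    (M : Finset V)
    (hmark : ∀ i, kα ≤ ((cl i).vars ∩ M).card ∧ kβ ≤ ((cl i).vars \ M).card)
    (s : ℝ) (hs : (k : ℝ) ≤ s)
    (hcond : 2 * Real.exp 1 * d * s ≤ (2 : ℝ) ^ kβ) :
    ∀ (v : {v // v ∈ M}) (σ : {v // v ∈ M} → Bool) (b : Bool),
      margin cl M σ v b ≤ (1 / 2) * Real.exp (1 / s) := by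
  classical
  intro v σ b
  rw [margin, condSet_eq_goodSet]
  exact card_filter_goodSet_div_le cl hk hdeg (fun i => (hmark i).2.trans <|
    card_le_card (sdiff_subset_sdiff subset_rfl (erase_subset _ _))) hs hcond (notMem_erase _ _) b
end
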